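/- Energy–momentum conservation for the center-of-momentum parametrization of post-collisional momenta: Let p, q ∈ ℝ³ with p + q ≠ 0, let ω ∈ 𝕊², and define g := √(2(p⁰q⁰ − p·q − 1)), s := g² + 4, ξ := (p⁰+q⁰)/√s, p' := (p+q)/2 + (g/2)(ω + (ξ−1)(p+q)((p+q)·ω)/|p+q|²), and q' := (p+q)/2 − (g/2)(ω + (ξ−1)(p+q)((p+q)·ω)/|p+q|²). Then p' + q' = p + q and √(1+|p'|²) + √(1+|q'|²) = √(1+|p|²) + √(1+|q|²). -/

import Mathlib

/-!
Write `P = p + q`, `E = p⁰ + q⁰` and `r = √s`. Then `E² = r² + |P|²` (that is, `s` is the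
invariant mass `E² − |P|²`) and `g² = r² − 4`. With these two relations alone, a direct
computation gives `1 + |p'|² = (E/2 + g (P·ω) / (2r))²`, and the right-hand side is a square
of a nonnegative number because `|g| ≤ r` and `|P·ω| ≤ |P| ≤ E`. Since `q'` is `p'` with `g`
replaced by `-g`, the two energies add up to `E`.
-/

open scoped InnerProductSpace

noncomputable section

/-- Momentum space ℝ³ with the Euclidean structure. -/
abbrev E3 : Type := EuclideanSpace ℝ (Fin 3)

/-- The relativistic energy `p⁰ = √(1+|p|²)`. -/
def en (p : E3) : ℝ := Real.sqrt (1 + ‖p‖ ^ 2)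

/-- The relative momentum `g(p,q) = √(2(p⁰q⁰ − p·q − 1))`. -/
def relg (p q : E3) : ℝ := Real.sqrt (2 * (en p * en q - ⟪p, q⟫_ℝ - 1))

/-- `s = g² + 4`. -/
def srel (p q : E3) : ℝ := relg p q ^ 2 + 4

/-- The post-collisional momentum `p'` in the center-of-momentum parametrization. -/
def pPost (p q ω : E3) : E3 :=
  (2 : ℝ)⁻¹ • (p + q) + (relg p q / 2) •
    (ω + (((en p + en q) / Real.sqrt (srel p q) - 1) *
      (⟪p + q, ω⟫_ℝ / ‖p + q‖ ^ 2)) • (p + q))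

/-- The post-collisional momentum `q' = p + q − p'`. -/
def qPost (p q ω : E3) : E3 := p + q - pPost p q ω

/-- The cosine of the scattering angle. -/
def cosTheta (p q ω : E3) : ℝ :=
  (-((en p - en q) * (en (pPost p q ω) - en (qPost p q ω))) +
    ⟪p - q, pPost p q ω - qPost p q ω⟫_ℝ) / relg p q ^ 2

/-- The cross product on ℝ³ (transported to the Euclidean space structure). -/
def cross3 (p q : E3) : E3 :=
  (EuclideanSpace.equiv (Fin 3) ℝ).symm
    (crossProduct ((EuclideanSpace.equiv (Fin 3) ℝ) p) ((EuclideanSpace.equiv (Fin 3) ℝ) q))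


/-- The post-collisional momentum `q'` written out explicitly. -/
def qPostExplicit (p q ω : E3) : E3 :=
  (2 : ℝ)⁻¹ • (p + q) - (relg p q / 2) •
    (ω + (((en p + en q) / Real.sqrt (srel p q) - 1) *
      (⟪p + q, ω⟫_ℝ / ‖p + q‖ ^ 2)) • (p + q))

section Boost

variable {F : Type*} [NormedAddCommGroup F] [InnerProductSpace ℝ F]

def postMomentum (P ω : F) (E r g : ℝ) : F :=
  (2 : ℝ)⁻¹ • P + (g / 2) • (ω + ((E / r - 1) * (⟪P, ω⟫_ℝ / ‖P‖ ^ 2)) • P)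

variable {P ω : F} {E r g : ℝ}

theorem one_add_norm_postMomentum_sq (hP : P ≠ 0) (hω : ‖ω‖ = 1) (hr : r ≠ 0)
    (hE : E ^ 2 = r ^ 2 + ‖P‖ ^ 2) (hg : g ^ 2 = r ^ 2 - 4) :
    1 + ‖postMomentum P ω E r g‖ ^ 2 = (E / 2 + g / (2 * r) * ⟪P, ω⟫_ℝ) ^ 2 := by
  have hP' : ‖P‖ ≠ 0 := norm_ne_zero_iff.mpr hP
  set a : ℝ := 2⁻¹ + g / 2 * ((E / r - 1) * (⟪P, ω⟫_ℝ / ‖P‖ ^ 2))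
  have hsplit : postMomentum P ω E r g = a • P + (g / 2) • ω := by
    rw [postMomentum]; module
  rw [hsplit, norm_add_sq_real, norm_smul, norm_smul, real_inner_smul_left,
    real_inner_smul_right, hω, Real.norm_eq_abs, Real.norm_eq_abs, mul_pow, mul_pow, sq_abs, sq_abs]
  simp only [a]
  field_simp
  linear_combination (r ^ 2 * ‖P‖ ^ 2) * hg + (g ^ 2 * ⟪P, ω⟫_ℝ ^ 2 - r ^ 2 * ‖P‖ ^ 2) * hE

theorem half_add_inner_nonneg (hω : ‖ω‖ = 1) (hr : 0 < r) (hE0 : 0 ≤ E)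
    (hE : E ^ 2 = r ^ 2 + ‖P‖ ^ 2) (hg : g ^ 2 = r ^ 2 - 4) :
    0 ≤ E / 2 + g / (2 * r) * ⟪P, ω⟫_ℝ := by
  have hgr : |g| ≤ r := abs_le_of_sq_le_sq (by linarith) hr.le
  have hPE : ‖P‖ ≤ E := abs_le_of_sq_le_sq (by nlinarith) hE0 |>.trans' (le_abs_self _)
  have hinner : |⟪P, ω⟫_ℝ| ≤ ‖P‖ := by simpa [hω] using abs_real_inner_le_norm P ω
  have hprod : |g * ⟪P, ω⟫_ℝ| ≤ r * E := by
    rw [abs_mul]; exact mul_le_mul hgr (hinner.trans hPE) (abs_nonneg _) hr.le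
  have hsum : 0 ≤ r * E + g * ⟪P, ω⟫_ℝ := by linarith [neg_abs_le (g * ⟪P, ω⟫_ℝ)]
  calc (0 : ℝ) ≤ (r * E + g * ⟪P, ω⟫_ℝ) / (2 * r) := by positivity
    _ = E / 2 + g / (2 * r) * ⟪P, ω⟫_ℝ := by field_simp

end Boost

theorem en_sq (p : E3) : en p ^ 2 = 1 + ‖p‖ ^ 2 := Real.sq_sqrt (by positivity)

theorem en_postMomentum {P ω : E3} {E r g : ℝ} (hP : P ≠ 0) (hω : ‖ω‖ = 1) (hr : 0 < r)
    (hE0 : 0 ≤ E) (hE : E ^ 2 = r ^ 2 + ‖P‖ ^ 2) (hg : g ^ 2 = r ^ 2 - 4) :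
    en (postMomentum P ω E r g) = E / 2 + g / (2 * r) * ⟪P, ω⟫_ℝ := by
  rw [en, one_add_norm_postMomentum_sq hP hω hr.ne' hE hg,
    Real.sqrt_sq (half_add_inner_nonneg hω hr hE0 hE hg)]

theorem inner_add_one_le_en_mul_en (p q : E3) : ⟪p, q⟫_ℝ + 1 ≤ en p * en q := by
  have hsq : (‖p‖ * ‖q‖ + 1) ^ 2 ≤ (1 + ‖p‖ ^ 2) * (1 + ‖q‖ ^ 2) := by
    nlinarith [sq_nonneg (‖p‖ - ‖q‖)]
  calc ⟪p, q⟫_ℝ + 1 ≤ ‖p‖ * ‖q‖ + 1 := by linarith [real_inner_le_norm p q]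
    _ ≤ en p * en q := by
      rw [en, en, ← Real.sqrt_mul (by positivity)]
      exact Real.le_sqrt_of_sq_le hsq

theorem relg_sq (p q : E3) : relg p q ^ 2 = 2 * (en p * en q - ⟪p, q⟫_ℝ - 1) :=
  Real.sq_sqrt (by linarith [inner_add_one_le_en_mul_en p q])

theorem srel_pos (p q : E3) : 0 < srel p q := by
  rw [srel]; positivity

theorem srel_eq_en_add_en_sq_sub_norm_add_sq (p q : E3) :
    srel p q = (en p + en q) ^ 2 - ‖p + q‖ ^ 2 := by
  rw [srel, relg_sq, norm_add_sq_real]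
  linear_combination (-1 : ℝ) * (en_sq p + en_sq q)

/-- **Energy–momentum conservation for the center-of-momentum parametrization of
the post-collisional momenta.** -/
theorem post_collisional_conservation (p q ω : E3)
    (hpq : p + q ≠ 0) (hω : ‖ω‖ = 1) :
    pPost p q ω + qPostExplicit p q ω = p + q ∧
    en (pPost p q ω) + en (qPostExplicit p q ω) = en p + en q := by
  refine ⟨by unfold pPost qPostExplicit; module, ?_⟩
  set r := Real.sqrt (srel p q)
  have hr : 0 < r := Real.sqrt_pos.mpr (srel_pos p q)
  have hr2 : r ^ 2 = srel p q := Real.sq_sqrt (srel_pos p q).le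
  have hE : (en p + en q) ^ 2 = r ^ 2 + ‖p + q‖ ^ 2 := by
    rw [hr2, srel_eq_en_add_en_sq_sub_norm_add_sq]; ring
  have hg : relg p q ^ 2 = r ^ 2 - 4 := by rw [hr2, srel]; ring
  have hE0 : 0 ≤ en p + en q := add_nonneg (Real.sqrt_nonneg _) (Real.sqrt_nonneg _)
  have hq : qPostExplicit p q ω = postMomentum (p + q) ω (en p + en q) r (-relg p q) := by
    unfold qPostExplicit postMomentum; module
  rw [hq, show pPost p q ω = postMomentum (p + q) ω (en p + en q) r (relg p q) from rfl,
    en_postMomentum hpq hω hr hE0 hE hg, en_postMomentum hpq hω hr hE0 hE (by rwa [neg_sq])]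
  ring
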